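/- Let g(d; ν, η, n) = exp(ν ηᵀ d) / [₀F₁(n/2, D²/4)]^ν for d ∈ ℝ₊^p, where ν > 0, η = (η₁,…,η_p) ∈ ℝ^p and n ≥ p. Then ∫_{ℝ₊^p} g(d; ν, η, n) dd < ∞ if and only if max_{1 ≤ j ≤ p} η_j < 1. -/

import Mathlib

open Matrix MeasureTheory

/-- Borel (product) σ-algebra on real matrices. -/
instance matrixMeasurableSpace {m k : ℕ} : MeasurableSpace (Matrix (Fin m) (Fin k) ℝ) :=
  inferInstanceAs (MeasurableSpace (Fin m → Fin k → ℝ))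

/-- `₀F₁(n/2, D²/4) = ∫ exp(∑ⱼ dⱼ X_{j,j}) dμ(X)` over the Stiefel manifold. -/
noncomputable def hypF {n p : ℕ} (hnp : p ≤ n) (μ : Measure (Matrix (Fin n) (Fin p) ℝ))
    (d : Fin p → ℝ) : ℝ :=
  ∫ X, Real.exp (∑ j : Fin p, d j * X (Fin.castLE hnp j) j) ∂μ

/-!
Columns of a Stiefel frame are unit vectors, so `hypF hnp μ d ≤ exp (∑ j, d j)` for `d ≥ 0`.
Conversely every frame is carried by an orthogonal matrix into the open set where all the
entries `X (castLE j) j` exceed `1 - δ`; by invariance this set has positive measure `K`, whence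
`hypF hnp μ d ≥ K exp ((1 - δ) ∑ j, d j)`. The kernel is therefore squeezed between
`exp (ν ∑ j, (η j - 1) d j)` and `K ^ (-ν) exp (ν ∑ j, (η j - 1 + δ) d j)`, and an exponential
`exp (∑ j, c j d j)` is integrable over the positive orthant exactly when every `c j < 0`.
-/

open Set Filter Topology

instance {m k : ℕ} : BorelSpace (Matrix (Fin m) (Fin k) ℝ) :=
  inferInstanceAs (BorelSpace (Fin m → Fin k → ℝ))

instance {m k : ℕ} : SecondCountableTopology (Matrix (Fin m) (Fin k) ℝ) :=
  inferInstanceAs (SecondCountableTopology (Fin m → Fin k → ℝ))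

lemma abs_apply_le_one_of_transpose_mul_self_eq_one {m k : Type*} [Fintype m] [DecidableEq k]
    {X : Matrix m k ℝ} (hX : Xᵀ * X = 1) (i : m) (j : k) : |X i j| ≤ 1 := by
  have h_col : ∑ l, X l j * X l j = 1 := by
    simpa [Matrix.mul_apply] using congrFun (congrFun hX j) j
  rw [abs_le_one_iff_mul_self_le_one, ← h_col]
  exact Finset.single_le_sum (f := fun l => X l j * X l j) (fun l _ => mul_self_nonneg _)
    (Finset.mem_univ i)

lemma isClosed_stiefel {m k : ℕ} : IsClosed {X : Matrix (Fin m) (Fin k) ℝ | Xᵀ * X = 1} :=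
  isClosed_eq (continuous_id.matrix_transpose.matrix_mul continuous_id) continuous_const

lemma exists_orthogonal_extension {n p : ℕ} (hnp : p ≤ n) {Y : Matrix (Fin n) (Fin p) ℝ}
    (hY : Yᵀ * Y = 1) :
    ∃ Q : Matrix (Fin n) (Fin n) ℝ, Qᵀ * Q = 1 ∧ ∀ i j, Q i (Fin.castLE hnp j) = Y i j := by
  classical
  let v : Fin n → EuclideanSpace ℝ (Fin n) := fun i =>
    if h : (i : ℕ) < p then WithLp.toLp 2 (fun k => Y k ⟨i, h⟩) else 0
  have h_orth : Orthonormal ℝ ({i : Fin n | (i : ℕ) < p}.domRestrict v) := by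
    rw [orthonormal_iff_ite]
    rintro ⟨i, hi : (i : ℕ) < p⟩ ⟨j, hj : (j : ℕ) < p⟩
    have h_entry := congrFun (congrFun hY ⟨i, hi⟩) ⟨j, hj⟩
    simp only [Matrix.mul_apply, Matrix.transpose_apply, Matrix.one_apply, Fin.mk.injEq,
      ← Fin.ext_iff] at h_entry
    simpa [v, dif_pos hi, dif_pos hj, PiLp.inner_apply, mul_comm] using h_entry
  obtain ⟨b, hb⟩ := h_orth.exists_orthonormalBasis_extension_of_card_eq (by simp)
  refine ⟨Matrix.of fun i k => b k i, ?_, fun i j => ?_⟩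
  · ext k l
    simpa [Matrix.mul_apply, Matrix.one_apply, PiLp.inner_apply, mul_comm] using
      orthonormal_iff_ite.mp b.orthonormal k l
  · simp [hb _ (show (Fin.castLE hnp j : ℕ) < p by simp), v]

section HypergeometricBounds

variable {n p : ℕ} (hnp : p ≤ n) {μ : Measure (Matrix (Fin n) (Fin p) ℝ)}

def diagGt (a : ℝ) : Set (Matrix (Fin n) (Fin p) ℝ) := {X | ∀ j, a < X (Fin.castLE hnp j) j}

lemma isOpen_diagGt (a : ℝ) : IsOpen (diagGt hnp a) := by
  simp only [diagGt, ofPred_forall]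
  exact isOpen_iInter_of_finite fun j => isOpen_lt continuous_const (by fun_prop)

lemma measure_diagGt_pos
    (hinv : ∀ Q : Matrix (Fin n) (Fin n) ℝ, Qᵀ * Q = 1 → Measure.map (fun X => Q * X) μ = μ)
    (hS : μ {X | Xᵀ * X = 1} ≠ 0) {a : ℝ} (ha : a < 1) : 0 < μ (diagGt hnp a) := by
  have h_cont (Q : Matrix (Fin n) (Fin n) ℝ) :
      Continuous fun X : Matrix (Fin n) (Fin p) ℝ => Q * X :=
    continuous_const.matrix_mul continuous_id
  let C : {Q : Matrix (Fin n) (Fin n) ℝ // Qᵀ * Q = 1} → Set (Matrix (Fin n) (Fin p) ℝ) :=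
    fun Q => (fun X => Q.1ᵀ * X) ⁻¹' diagGt hnp a
  have hC_open : ∀ Q, IsOpen (C Q) := fun Q => (isOpen_diagGt hnp a).preimage (h_cont _)
  have hC_measure : ∀ Q, μ (C Q) = μ (diagGt hnp a) := by
    intro Q
    have hQ : Q.1ᵀᵀ * Q.1ᵀ = 1 := by rw [transpose_transpose, mul_eq_one_comm, Q.2]
    rw [← Measure.map_apply (h_cont _).measurable (isOpen_diagGt hnp a).measurableSet, hinv _ hQ]
  have h_cover : {X : Matrix (Fin n) (Fin p) ℝ | Xᵀ * X = 1} ⊆ ⋃ Q, C Q := by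
    intro Y hY
    obtain ⟨Q, hQ, hQY⟩ := exists_orthogonal_extension hnp hY
    refine mem_iUnion.2 ⟨⟨Q, hQ⟩, fun j => ?_⟩
    have h_diag : (Qᵀ * Y) (Fin.castLE hnp j) j = 1 := by
      simpa [Matrix.mul_apply, hQY] using congrFun (congrFun hY j) j
    simpa [C, h_diag] using ha
  obtain ⟨T, hT, hT_union⟩ := TopologicalSpace.isOpen_iUnion_countable C hC_open
  refine pos_iff_ne_zero.2 fun hU => hS (measure_mono_null (h_cover.trans hT_union.symm.subset) ?_)
  exact (measure_biUnion_null_iff hT).2 fun Q _ => (hC_measure Q).trans hU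

lemma integrable_exp_sum_mul_diag [IsFiniteMeasure μ] (hS : ∀ᵐ X ∂μ, Xᵀ * X = 1)
    (d : Fin p → ℝ) :
    Integrable (fun X : Matrix (Fin n) (Fin p) ℝ =>
      Real.exp (∑ j, d j * X (Fin.castLE hnp j) j)) μ := by
  refine Integrable.mono' (integrable_const (Real.exp (∑ j, |d j|)))
    (Continuous.aestronglyMeasurable (by fun_prop)) ?_
  filter_upwards [hS] with X hX
  rw [Real.norm_of_nonneg (Real.exp_pos _).le, Real.exp_le_exp]
  refine Finset.sum_le_sum fun j _ => ?_
  calc d j * X (Fin.castLE hnp j) j ≤ |d j| * |X (Fin.castLE hnp j) j| := by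
        rw [← abs_mul]; exact le_abs_self _
    _ ≤ |d j| := mul_le_of_le_one_right (abs_nonneg _)
        (abs_apply_le_one_of_transpose_mul_self_eq_one hX _ _)

lemma hypF_pos [IsFiniteMeasure μ] [NeZero μ] (hS : ∀ᵐ X ∂μ, Xᵀ * X = 1) (d : Fin p → ℝ) :
    0 < hypF hnp μ d :=
  integral_exp_pos (integrable_exp_sum_mul_diag hnp hS d)

lemma hypF_le_exp_sum [IsProbabilityMeasure μ] (hS : ∀ᵐ X ∂μ, Xᵀ * X = 1) {d : Fin p → ℝ}
    (hd : ∀ j, 0 ≤ d j) : hypF hnp μ d ≤ Real.exp (∑ j, d j) := by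
  suffices hypF hnp μ d ≤ ∫ _, Real.exp (∑ j, d j) ∂μ by simpa using this
  refine integral_mono_ae (integrable_exp_sum_mul_diag hnp hS d) (integrable_const _) ?_
  filter_upwards [hS] with X hX
  refine Real.exp_le_exp.2 (Finset.sum_le_sum fun j _ => mul_le_of_le_one_right (hd j) ?_)
  exact (le_abs_self _).trans (abs_apply_le_one_of_transpose_mul_self_eq_one hX _ _)

lemma exp_mul_measure_diagGt_le_hypF [IsFiniteMeasure μ] (hS : ∀ᵐ X ∂μ, Xᵀ * X = 1) (a : ℝ)
    {d : Fin p → ℝ} (hd : ∀ j, 0 ≤ d j) :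
    Real.exp (a * ∑ j, d j) * (μ (diagGt hnp a)).toReal ≤ hypF hnp μ d := by
  have h_int := integrable_exp_sum_mul_diag hnp hS d
  refine (setIntegral_ge_of_const_le_real (isOpen_diagGt hnp a).measurableSet
    (measure_ne_top μ _) ?_ h_int.integrableOn).trans
    (setIntegral_le_integral h_int (Eventually.of_forall fun X => (Real.exp_pos _).le))
  intro X hX
  rw [Real.exp_le_exp, Finset.mul_sum]
  exact Finset.sum_le_sum fun j _ => by
    rw [mul_comm]; exact mul_le_mul_of_nonneg_left (hX j).le (hd j)

end HypergeometricBounds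

section Orthant

variable {ι : Type*} [Fintype ι]

lemma measurableSet_orthant : MeasurableSet {d : ι → ℝ | ∀ j, 0 < d j} := by
  simp only [ofPred_forall]
  exact MeasurableSet.iInter fun j => measurableSet_lt measurable_const (measurable_pi_apply j)

lemma lintegral_orthant_exp_lt_top {c : ι → ℝ} (hc : ∀ j, c j < 0) :
    ∫⁻ d in {d : ι → ℝ | ∀ j, 0 < d j}, ENNReal.ofReal (Real.exp (∑ j, c j * d j)) < ⊤ := by
  have h : Integrable (fun d : ι → ℝ => ∏ j, Real.exp (c j * d j))
      (volume.restrict (univ.pi fun _ => Ioi 0)) := by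
    rw [volume_pi, Measure.restrict_pi_pi]
    exact Integrable.fintype_prod fun j => integrableOn_exp_mul_Ioi (hc j) 0
  have h_orthant : {d : ι → ℝ | ∀ j, 0 < d j} = univ.pi fun _ => Ioi 0 := by ext; simp
  simpa only [h_orthant, Real.exp_sum] using h.lintegral_lt_top

lemma lintegral_orthant_exp_eq_top {c : ι → ℝ} {j₀ : ι} (hc : 0 ≤ c j₀) :
    ∫⁻ d in {d : ι → ℝ | ∀ j, 0 < d j}, ENNReal.ofReal (Real.exp (∑ j, c j * d j)) = ⊤ := by
  classical
  set B : Set (ι → ℝ) := univ.pi (Function.update (fun _ => Ioo 0 1) j₀ (Ioi 0))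
  have hB_sub : B ⊆ {d | ∀ j, 0 < d j} := by
    intro d hd j
    have := hd j (mem_univ j)
    rcases eq_or_ne j j₀ with rfl | hj
    · simpa using this
    · simp only [Function.update_of_ne hj] at this
      exact this.1
  have hB_vol : volume B = ⊤ := by
    rw [volume_pi_pi]
    simp [Function.apply_update (fun _ => (volume : Measure ℝ)), Finset.prod_update_of_mem]
  have hB_le : ∀ d ∈ B, ENNReal.ofReal (Real.exp (-∑ j, |c j|)) ≤
      ENNReal.ofReal (Real.exp (∑ j, c j * d j)) := by
    intro d hd
    refine ENNReal.ofReal_le_ofReal (Real.exp_le_exp.2 ?_)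
    rw [← Finset.sum_neg_distrib]
    refine Finset.sum_le_sum fun j _ => ?_
    have := hd j (mem_univ j)
    rcases eq_or_ne j j₀ with rfl | hj
    · simp only [Function.update_self, mem_Ioi] at this
      nlinarith [abs_nonneg (c j)]
    · simp only [Function.update_of_ne hj, mem_Ioo] at this
      cases abs_cases (c j) <;> nlinarith
  have hB_meas : MeasurableSet B := by
    refine MeasurableSet.univ_pi fun j => ?_
    rcases eq_or_ne j j₀ with rfl | hj
    · simp [measurableSet_Ioi]
    · simp [Function.update_of_ne hj, measurableSet_Ioo]
  refine top_le_iff.1 (le_trans ?_ (lintegral_mono_set hB_sub))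
  calc ⊤ = ∫⁻ _ in B, ENNReal.ofReal (Real.exp (-∑ j, |c j|)) := by
        simp [hB_vol, Real.exp_pos]
    _ ≤ _ := setLIntegral_mono' hB_meas hB_le

lemma lintegral_orthant_exp_lt_top_iff (c : ι → ℝ) :
    ∫⁻ d in {d : ι → ℝ | ∀ j, 0 < d j}, ENNReal.ofReal (Real.exp (∑ j, c j * d j)) < ⊤ ↔
      ∀ j, c j < 0 := by
  refine ⟨fun h j => ?_, lintegral_orthant_exp_lt_top⟩
  by_contra! hc
  exact h.ne (lintegral_orthant_exp_eq_top hc)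

end Orthant

section Kernel

variable {n p : ℕ} (hnp : p ≤ n) {μ : Measure (Matrix (Fin n) (Fin p) ℝ)} {ν : ℝ}
  (η : Fin p → ℝ) {d : Fin p → ℝ}

lemma exp_sum_le_kernel [IsProbabilityMeasure μ] (hS : ∀ᵐ X ∂μ, Xᵀ * X = 1) (hν : 0 ≤ ν)
    (hd : ∀ j, 0 ≤ d j) :
    Real.exp (∑ j, ν * (η j - 1) * d j) ≤ Real.exp (ν * ∑ j, η j * d j) / hypF hnp μ d ^ ν := by
  have h_pos := hypF_pos hnp hS d
  have h_le : hypF hnp μ d ^ ν ≤ Real.exp (ν * ∑ j, d j) := by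
    calc hypF hnp μ d ^ ν ≤ Real.exp (∑ j, d j) ^ ν :=
          Real.rpow_le_rpow h_pos.le (hypF_le_exp_sum hnp hS hd) hν
      _ = Real.exp (ν * ∑ j, d j) := by rw [← Real.exp_mul, mul_comm]
  calc Real.exp (∑ j, ν * (η j - 1) * d j)
      = Real.exp (ν * ∑ j, η j * d j) / Real.exp (ν * ∑ j, d j) := by
        rw [← Real.exp_sub, Finset.mul_sum, Finset.mul_sum, ← Finset.sum_sub_distrib]
        exact congrArg Real.exp (Finset.sum_congr rfl fun j _ => by ring)
    _ ≤ _ := div_le_div_of_nonneg_left (Real.exp_pos _).le (Real.rpow_pos_of_pos h_pos ν) h_le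

lemma kernel_le_exp_sum [IsFiniteMeasure μ] (hS : ∀ᵐ X ∂μ, Xᵀ * X = 1) (hν : 0 ≤ ν) (δ : ℝ)
    (hK : 0 < (μ (diagGt hnp (1 - δ))).toReal) (hd : ∀ j, 0 ≤ d j) :
    Real.exp (ν * ∑ j, η j * d j) / hypF hnp μ d ^ ν ≤
      (μ (diagGt hnp (1 - δ))).toReal ^ (-ν) * Real.exp (∑ j, ν * (η j - 1 + δ) * d j) := by
  set K := (μ (diagGt hnp (1 - δ))).toReal
  have h_base : 0 < Real.exp ((1 - δ) * ∑ j, d j) * K := mul_pos (Real.exp_pos _) hK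
  have h_exp : Real.exp (∑ j, ν * (η j - 1 + δ) * d j) =
      Real.exp (ν * ∑ j, η j * d j) / Real.exp ((1 - δ) * (∑ j, d j) * ν) := by
    rw [← Real.exp_sub]
    simp only [Finset.mul_sum, Finset.sum_mul, ← Finset.sum_sub_distrib]
    exact congrArg Real.exp (Finset.sum_congr rfl fun j _ => by ring)
  calc Real.exp (ν * ∑ j, η j * d j) / hypF hnp μ d ^ ν
      ≤ Real.exp (ν * ∑ j, η j * d j) / (Real.exp ((1 - δ) * ∑ j, d j) * K) ^ ν :=
        div_le_div_of_nonneg_left (Real.exp_pos _).le (Real.rpow_pos_of_pos h_base ν)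
          (Real.rpow_le_rpow h_base.le (exp_mul_measure_diagGt_le_hypF hnp hS (1 - δ) hd) hν)
    _ = K ^ (-ν) * Real.exp (∑ j, ν * (η j - 1 + δ) * d j) := by
        rw [Real.mul_rpow (Real.exp_pos _).le hK.le, ← Real.exp_mul, Real.rpow_neg hK.le, h_exp]
        field_simp

end Kernel

theorem stmt7_general {n p : ℕ} (hnp : p ≤ n)
    (μ : Measure (Matrix (Fin n) (Fin p) ℝ))
    (hprob : IsProbabilityMeasure μ)
    (hsupp : μ {X : Matrix (Fin n) (Fin p) ℝ | Xᵀ * X = 1} = 1)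
    (hinv : ∀ Q : Matrix (Fin n) (Fin n) ℝ, Qᵀ * Q = 1 →
      Measure.map (fun X => Q * X) μ = μ)
    (ν : ℝ) (hν : 0 < ν) (η : Fin p → ℝ) :
    (∫⁻ d in {d : Fin p → ℝ | ∀ j, 0 < d j},
        ENNReal.ofReal (Real.exp (ν * ∑ j, η j * d j) / (hypF hnp μ d) ^ ν)) < ⊤ ↔
      ∀ j, η j < 1 := by
  have hS : ∀ᵐ X ∂μ, Xᵀ * X = 1 :=
    (ae_iff_measure_eq isClosed_stiefel.measurableSet.nullMeasurableSet).2 (by simp [hsupp])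
  constructor
  · intro h_fin j
    have h_lower := (lintegral_orthant_exp_lt_top_iff fun j => ν * (η j - 1)).1
      ((setLIntegral_mono' measurableSet_orthant fun d hd => ENNReal.ofReal_le_ofReal
        (exp_sum_le_kernel hnp η hS hν.le fun j => (hd j).le)).trans_lt h_fin) j
    linarith [neg_of_mul_neg_right h_lower hν.le]
  · intro hη
    obtain ⟨δ, hδη, hδ⟩ : ∃ δ, (∀ j, δ < 1 - η j) ∧ 0 < δ :=
      ((eventually_all.2 fun j => eventually_lt_nhds (sub_pos.2 (hη j))).filter_mono
        nhdsWithin_le_nhds |>.and self_mem_nhdsWithin).exists (f := 𝓝[>] (0 : ℝ))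
    set K := (μ (diagGt hnp (1 - δ))).toReal
    have hK : 0 < K := ENNReal.toReal_pos
      (measure_diagGt_pos hnp hinv (by simp [hsupp]) (by linarith)).ne' (measure_ne_top μ _)
    calc _ ≤ ∫⁻ d in {d : Fin p → ℝ | ∀ j, 0 < d j},
          ENNReal.ofReal (K ^ (-ν)) * ENNReal.ofReal (Real.exp (∑ j, ν * (η j - 1 + δ) * d j)) :=
          setLIntegral_mono' measurableSet_orthant fun d hd => by
            rw [← ENNReal.ofReal_mul (Real.rpow_nonneg hK.le _)]
            exact ENNReal.ofReal_le_ofReal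
              (kernel_le_exp_sum hnp η hS hν.le δ hK fun j => (hd j).le)
      _ = ENNReal.ofReal (K ^ (-ν)) * ∫⁻ d in {d : Fin p → ℝ | ∀ j, 0 < d j},
          ENNReal.ofReal (Real.exp (∑ j, ν * (η j - 1 + δ) * d j)) :=
          lintegral_const_mul' _ _ ENNReal.ofReal_ne_top
      _ < ⊤ := ENNReal.mul_lt_top ENNReal.ofReal_lt_top (lintegral_orthant_exp_lt_top fun j =>
          mul_neg_of_pos_of_neg hν (by linarith [hδη j]))

/-- The kernel `g(d; ν, η, n) = exp(ν ηᵀ d)/[₀F₁(n/2, D²/4)]^ν` is integrable over `ℝ₊^p`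
if and only if `max_j η_j < 1`. Here `μ` is the normalized Haar probability measure on the
Stiefel manifold `V_{n,p}`, `n ≥ p ≥ 1`, and `ν > 0`. -/
theorem stmt7 {n p : ℕ} (hp : 0 < p) (hnp : p ≤ n)
    (μ : Measure (Matrix (Fin n) (Fin p) ℝ))
    (hprob : IsProbabilityMeasure μ)
    (hsupp : μ {X : Matrix (Fin n) (Fin p) ℝ | Xᵀ * X = 1} = 1)
    (hinv : ∀ Q : Matrix (Fin n) (Fin n) ℝ, Qᵀ * Q = 1 →
      Measure.map (fun X => Q * X) μ = μ)
    (ν : ℝ) (hν : 0 < ν) (η : Fin p → ℝ) :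
    (∫⁻ d in {d : Fin p → ℝ | ∀ j, 0 < d j},
        ENNReal.ofReal (Real.exp (ν * ∑ j, η j * d j) / (hypF hnp μ d) ^ ν)) < ⊤ ↔
      ∀ j, η j < 1 :=
  stmt7_general hnp μ hprob hsupp hinv ν hν η
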